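/- arXiv:1610.01344 — 3 statements merged into one kernel-verified Lean document; each statement's English description precedes it below -/
import Mathlib

section
/- Every finitely generated free group is residually finite: for any finite subset S of a free group F of finite rank not containing the identity, there exists a finite group K and a group homomorphism φ : F → K such that φ(s) ≠ 1 for all s ∈ S. -/
/-!
The free group acts on the finite set `T` of (the elements represented by) the suffixes of a
word `w = x₁ ⋯ xₙ`: each generator acts by a permutation of `T` extending left multiplication
wherever that stays inside `T`. Reading `w` from the right walks `1 ↦ xₙ ↦ xₙ₋₁xₙ ↦ ⋯ ↦ w`
inside `T`, so the image of `w` moves `1` when `w ≠ 1`. Finitely many elements are separated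
simultaneously by the product of the finite quotients separating each of them.
-/

open Equiv

theorem Finset.exists_perm_apply_eq_smul {G X : Type*} [Group G] [MulAction G X]
    (T : Finset X) (g : G) :
    ∃ σ : Perm T, ∀ x : T, g • (x : X) ∈ T → (σ x : X) = g • (x : X) := by
  obtain ⟨σ, hσ⟩ := Perm.exists_extending_pair (α := {x : T // g • (x : X) ∈ T})
    (fun x ↦ x.1) (fun x ↦ ⟨g • (x.1 : X), x.2⟩) Subtype.val_injective
    fun x y h ↦ Subtype.ext <| Subtype.ext <| smul_left_cancel g congr($h.1)
  exact ⟨σ, fun x hx ↦ congr($(hσ ⟨x, hx⟩).1)⟩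

namespace FreeGroup

variable {α X : Type*} [MulAction (FreeGroup α) X] {T : Finset X}

theorem lift_mk_apply_eq_smul (π : α → Perm T)
    (hπ : ∀ a (x : T), of a • (x : X) ∈ T → (π a x : X) = of a • (x : X)) :
    ∀ (L : List (α × Bool)) (x : T), (∀ t, t <:+ L → mk t • (x : X) ∈ T) →
      (lift π (mk L) x : X) = mk L • (x : X)
  | [], x, _ => by simp [← one_eq_mk]
  | (a, b) :: L, x, hL => by
    have ih := lift_mk_apply_eq_smul π hπ L x fun t ht ↦ hL t (ht.trans (L.suffix_cons _))
    have hmem : mk ((a, b) :: L) • (x : X) ∈ T := hL _ List.suffix_rfl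
    rw [← List.singleton_append, ← mul_mk, MonoidHom.map_mul, Perm.mul_apply, mul_smul, ← ih]
    rw [← List.singleton_append, ← mul_mk, mul_smul, ← ih] at hmem
    generalize lift π (mk L) x = y at hmem ⊢
    cases b
    · change (of a)⁻¹ • (y : X) ∈ T at hmem
      change ((π a)⁻¹ y : X) = (of a)⁻¹ • (y : X)
      have h : (π a ⟨_, hmem⟩ : X) = y := (hπ a ⟨_, hmem⟩ (by simp)).trans (smul_inv_smul _ _)
      rw [Perm.inv_eq_iff_eq.mpr (Subtype.ext h).symm]
    · exact hπ a y hmem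

instance residuallyFinite : Group.ResiduallyFinite (FreeGroup α) := by
  classical
  refine Group.residuallyFinite_of_forall_exists_finite_monoidHom fun w hw ↦ ?_
  let T : Finset (FreeGroup α) := (w.toWord.tails.map mk).toFinset
  have hT : ∀ t, t <:+ w.toWord → mk t ∈ T := fun t ht ↦ by simpa [T] using ⟨t, ht, rfl⟩
  have h1 : (1 : FreeGroup α) ∈ T := one_eq_mk (α := α) ▸ hT [] List.nil_suffix
  choose π hπ using fun a : α ↦ T.exists_perm_apply_eq_smul (of a)
  refine ⟨Perm T, inferInstance, inferInstance, lift π, fun h ↦ hw ?_⟩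
  have hw1 := lift_mk_apply_eq_smul π hπ w.toWord ⟨1, h1⟩ fun t ht ↦ by simpa using hT t ht
  rw [mk_toWord, h] at hw1
  simpa using hw1.symm

end FreeGroup

theorem Group.ResiduallyFinite.exists_finite_monoidHom_forall_map_ne_one.{u} {G : Type u}
    [Group G] [ResiduallyFinite G] (S : Finset G) (hS : 1 ∉ S) :
    ∃ (K : Type u) (_ : Group K) (_ : Finite K) (φ : G →* K), ∀ s ∈ S, φ s ≠ 1 := by
  choose H hH using fun s : S ↦
    exists_finiteIndexNormalSubgroup_notMem s.1 (ne_of_mem_of_not_mem s.2 hS)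
  refine ⟨∀ s : S, G ⧸ (H s).toSubgroup, inferInstance, inferInstance,
    MonoidHom.pi fun s ↦ QuotientGroup.mk' (H s).toSubgroup, fun s hs h ↦ hH ⟨s, hs⟩ ?_⟩
  simpa [FiniteIndexNormalSubgroup.mem_toSubgroup_iff] using congr_fun h ⟨s, hs⟩

/-- Finitely generated free groups are residually finite: any finite set of
nonidentity elements is simultaneously killed-free in some finite quotient. -/
theorem freeGroup_residually_finite (k : ℕ) (S : Finset (FreeGroup (Fin k)))
    (hS : (1 : FreeGroup (Fin k)) ∉ S) :
    ∃ (K : Type) (_ : Group K) (_ : Finite K) (φ : FreeGroup (Fin k) →* K),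
      ∀ s ∈ S, φ s ≠ 1 :=
  Group.ResiduallyFinite.exists_finite_monoidHom_forall_map_ne_one S hS
end

section
/- The ideal I₁ is proper: the whole countable set U is not a finite union of sets v each satisfying property (*). Specifically, if v₀,…,v_n ⊆ U each satisfy (*), then there exists η' ∈ 2^{<ω} such that u_{η'} is disjoint from v₀ ∪ … ∪ v_n. -/
/-- `AgreeLen ρ ν n`: the longest common initial segment of the infinite branch
`ρ ∈ 2^ω` and the finite sequence `ν ∈ 2^{<ω}` is `ρ↾n`. -/
def AgreeLen (ρ : ℕ → Bool) (ν : List Bool) (n : ℕ) : Prop :=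
  n ≤ ν.length ∧ (∀ i < n, ν[i]? = some (ρ i)) ∧
    (n = ν.length ∨ ν[n]? ≠ some (ρ n))

/-- Property (*) of the ideal `I₁`: for some branch `ρ`, for every `n` there is at
most one pair `(a, ν)` with `a ∈ v ∩ u_ν` and `ρ ∩ ν = ρ↾n`. -/
def StarProp {U : Type*} (u : List Bool → Set U) (v : Set U) : Prop :=
  ∃ ρ : ℕ → Bool, ∀ n : ℕ, ∀ a₁ a₂ : U, ∀ ν₁ ν₂ : List Bool,
    a₁ ∈ v ∩ u ν₁ → a₂ ∈ v ∩ u ν₂ → AgreeLen ρ ν₁ n → AgreeLen ρ ν₂ n →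
      a₁ = a₂ ∧ ν₁ = ν₂

/-!
Choose branches `ρ₀, …, ρₙ` witnessing (*) for `v₀, …, vₙ` and let `σ` be the diagonal stem
`σ(k) = ¬ρₖ(k)`, of length `n + 1`. Every extension of `σ` meets `ρᵢ` in the same initial
segment `ρᵢ↾dᵢ`, fixed by where `σ` first leaves `ρᵢ`; so by (*) the set `vᵢ` meets `u_ν` for at
most one extension `ν` of `σ`. Among the `n + 2` extensions `σ ⌢ 1ʲ`, `j ≤ n + 1`, one is therefore
missed by every `vᵢ`.
-/

def StarPropAt {U : Type*} (u : List Bool → Set U) (v : Set U) (ρ : ℕ → Bool) : Prop :=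
  ∀ n : ℕ, ∀ a₁ a₂ : U, ∀ ν₁ ν₂ : List Bool,
    a₁ ∈ v ∩ u ν₁ → a₂ ∈ v ∩ u ν₂ → AgreeLen ρ ν₁ n → AgreeLen ρ ν₂ n → a₁ = a₂ ∧ ν₁ = ν₂

theorem StarPropAt.eq_of_agreeLen {U : Type*} {u : List Bool → Set U} {v : Set U}
    {ρ : ℕ → Bool} (h : StarPropAt u v ρ) {n : ℕ} {ν₁ ν₂ : List Bool}
    (h₁ : AgreeLen ρ ν₁ n) (h₂ : AgreeLen ρ ν₂ n)
    (hv₁ : (v ∩ u ν₁).Nonempty) (hv₂ : (v ∩ u ν₂).Nonempty) : ν₁ = ν₂ :=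
  let ⟨a₁, ha₁⟩ := hv₁
  let ⟨a₂, ha₂⟩ := hv₂
  (h n a₁ a₂ ν₁ ν₂ ha₁ ha₂ h₁ h₂).2

theorem exists_forall_agreeLen_append {ρ : ℕ → Bool} {σ : List Bool}
    (h : ∃ m < σ.length, σ[m]? ≠ some (ρ m)) : ∃ d, ∀ τ, AgreeLen ρ (σ ++ τ) d := by
  classical
  obtain ⟨hlt, hne⟩ := Nat.find_spec h
  refine ⟨Nat.find h, fun τ => ⟨by rw [List.length_append]; omega, fun i hi => ?_, Or.inr ?_⟩⟩
  · have hi' : i < σ.length := hi.trans hlt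
    rw [List.getElem?_append_left hi']
    simpa [hi'] using Nat.find_min h hi
  · rwa [List.getElem?_append_left hlt]

def diagonal {k : ℕ} (ρ : Fin k → ℕ → Bool) : List Bool :=
  List.ofFn fun i => !ρ i i

theorem exists_getElem?_diagonal_ne {k : ℕ} (ρ : Fin k → ℕ → Bool) (i : Fin k) :
    ∃ m < (diagonal ρ).length, (diagonal ρ)[m]? ≠ some (ρ i m) :=
  ⟨i, by simp [diagonal], by simp [diagonal]⟩

theorem exists_disjoint_iUnion_of_card_lt {U ι κ : Type*} [Fintype ι] [Fintype κ]
    (v : ι → Set U) (w : κ → Set U) (hcard : Fintype.card ι < Fintype.card κ)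
    (hmeet : ∀ i k k', (v i ∩ w k).Nonempty → (v i ∩ w k').Nonempty → k = k') :
    ∃ k, Disjoint (w k) (⋃ i, v i) := by
  by_contra! hall
  have hmeets : ∀ k, ∃ i, (v i ∩ w k).Nonempty := fun k => by
    obtain ⟨a, hw, hv⟩ := Set.not_disjoint_iff.1 (hall k)
    obtain ⟨i, hi⟩ := Set.mem_iUnion.1 hv
    exact ⟨i, a, hi, hw⟩
  choose f hf using hmeets
  have hinj : Function.Injective f := fun k k' hkk' =>
    hmeet (f k) k k' (hf k) (hkk' ▸ hf k')
  exact (Fintype.card_le_of_injective f hinj).not_gt hcard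

theorem ideal_I1_proper_general {U : Type*} (u : List Bool → Set U)
    (n : ℕ) (v : Fin (n + 1) → Set U)
    (hv : ∀ i : Fin (n + 1), StarProp u (v i)) :
    ∃ η' : List Bool, Disjoint (u η') (⋃ i, v i) := by
  choose ρ hρ using hv
  have hstar : ∀ i, StarPropAt u (v i) (ρ i) := hρ
  choose d hd using fun i => exists_forall_agreeLen_append (exists_getElem?_diagonal_ne ρ i)
  obtain ⟨j, hj⟩ := exists_disjoint_iUnion_of_card_lt v
    (fun j : Fin (n + 2) => u (diagonal ρ ++ List.replicate j true)) (by simp)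
    fun i j j' hj hj' => by
      have h := List.append_cancel_left ((hstar i).eq_of_agreeLen (hd i _) (hd i _) hj hj')
      exact Fin.ext (List.replicate_inj.1 h).1
  exact ⟨_, hj⟩

/-- The ideal `I₁` is proper: if `v₀, …, v_n` each satisfy (*), then some `u_{η'}`
is disjoint from their union (so the union of finitely many (*)-sets is not all
of `U`, the `u_ρ` being nonempty and pairwise disjoint with union `U`). -/
theorem ideal_I1_proper {U : Type*} (u : List Bool → Set U)
    (hdisj : ∀ ρ σ : List Bool, ρ ≠ σ → Disjoint (u ρ) (u σ))
    (hne : ∀ ρ : List Bool, (u ρ).Nonempty)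
    (hcover : (⋃ ρ : List Bool, u ρ) = Set.univ)
    (n : ℕ) (v : Fin (n + 1) → Set U)
    (hv : ∀ i : Fin (n + 1), StarProp u (v i)) :
    ∃ η' : List Bool, Disjoint (u η') (⋃ i, v i) :=
  ideal_I1_proper_general u n v hv
end

section
/- Let (ν_n : n ∈ B) be an infinite sequence of elements of 2^{<ω} indexed by an infinite set B ⊆ ω such that for all n₁ < n₂ < n₃ in B, lg(ν_{n₂} ∩ ν_{n₃}) > lg(ν_{n₁}), where ∩ denotes longest common initial segment. Then there is η₂ ∈ 2^ω such that for n < k in B, ν_n ∩ η₂ is a proper initial segment of ν_k ∩ η₂, and η₂ = ⋃_{n ∈ B}(ν_n ∩ η₂). -/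
/-- Length of the longest common initial segment of two finite binary sequences. -/
def meetLen (σ τ : List Bool) : ℕ := ((σ.zip τ).takeWhile fun p => p.1 == p.2).length

/-- The longest common initial segment `σ ∩ τ`. -/
def meet (σ τ : List Bool) : List Bool := σ.take (meetLen σ τ)

/-- The initial segment `η↾n` of a branch `η ∈ 2^ω`. -/
def seg (η : ℕ → Bool) (n : ℕ) : List Bool := List.ofFn fun i : Fin n => η i

/-- The longest common initial segment `ν ∩ η` of `ν ∈ 2^{<ω}` and `η ∈ 2^ω`. -/
def meetInf (ν : List Bool) (η : ℕ → Bool) : List Bool := meet ν (seg η ν.length)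

lemma meetLen_nil_right (σ : List Bool) : meetLen σ [] = 0 := by simp [meetLen]

lemma meetLen_cons (a b : Bool) (σ τ : List Bool) :
    meetLen (a :: σ) (b :: τ) = if a = b then meetLen σ τ + 1 else 0 := by
  by_cases h : a = b <;> simp [meetLen, List.takeWhile_cons, h]

lemma meetLen_le_left : ∀ σ τ : List Bool, meetLen σ τ ≤ σ.length := by
  intro σ
  induction σ with
  | nil => intro τ; simp [meetLen]
  | cons a σ ih =>
    intro τ
    cases τ with
    | nil => simp [meetLen_nil_right]
    | cons b τ =>
      rw [meetLen_cons]
      by_cases h : a = b <;> simp [h]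
      exact ih τ

lemma meetLen_le_right : ∀ σ τ : List Bool, meetLen σ τ ≤ τ.length := by
  intro σ
  induction σ with
  | nil => intro τ; simp [meetLen]
  | cons a σ ih =>
    intro τ
    cases τ with
    | nil => simp [meetLen_nil_right]
    | cons b τ =>
      rw [meetLen_cons]
      by_cases h : a = b <;> simp [h]
      exact ih τ

lemma meetLen_agree : ∀ σ τ : List Bool, ∀ i, i < meetLen σ τ →
    σ.getD i false = τ.getD i false := by
  intro σ
  induction σ with
  | nil => intro τ i h; simp [meetLen] at h
  | cons a σ ih =>
    intro τ i h
    cases τ with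
    | nil => simp [meetLen_nil_right] at h
    | cons b τ =>
      rw [meetLen_cons] at h
      by_cases hab : a = b
      · simp [hab] at h
        cases i with
        | zero => simp [hab]
        | succ i => simpa using ih τ i (by omega)
      · simp [hab] at h

lemma le_meetLen : ∀ σ τ : List Bool, ∀ m, m ≤ σ.length → m ≤ τ.length →
    (∀ i, i < m → σ.getD i false = τ.getD i false) → m ≤ meetLen σ τ := by
  intro σ
  induction σ with
  | nil => intro τ m h _ _; simpa [meetLen] using by simpa using h
  | cons a σ ih =>
    intro τ m h1 h2 hag
    cases τ with
    | nil => simp at h2; omega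
    | cons b τ =>
      cases m with
      | zero => omega
      | succ m =>
        have hab : a = b := by simpa using hag 0 (by omega)
        rw [meetLen_cons, if_pos hab]
        have := ih τ m (by simpa using h1) (by simpa using h2)
          (fun i hi => by simpa using hag (i+1) (by omega))
        omega

lemma meet_length (σ τ : List Bool) : (meet σ τ).length = meetLen σ τ := by
  simp [meet, meetLen_le_left]

lemma meet_eq_take_right (σ τ : List Bool) : meet σ τ = τ.take (meetLen σ τ) := by
  apply List.ext_getElem
  · simp [meet_length, meetLen_le_right]
  · intro i h1 h2
    have hi : i < meetLen σ τ := by simpa [meet_length] using h1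
    have := meetLen_agree σ τ i hi
    have hσ : i < σ.length := lt_of_lt_of_le hi (meetLen_le_left σ τ)
    have hτ : i < τ.length := lt_of_lt_of_le hi (meetLen_le_right σ τ)
    simp [meet, List.getElem_take]
    rw [← List.getD_eq_getElem _ false hσ, ← List.getD_eq_getElem _ false hτ]
    exact this

lemma seg_length (η : ℕ → Bool) (n : ℕ) : (seg η n).length = n := by simp [seg]

lemma seg_getD (η : ℕ → Bool) (n i : ℕ) (h : i < n) : (seg η n).getD i false = η i := by
  rw [List.getD_eq_getElem _ false (by simpa [seg_length] using h)]
  simp [seg]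

lemma seg_take (η : ℕ → Bool) (n m : ℕ) (h : m ≤ n) : (seg η n).take m = seg η m := by
  apply List.ext_getElem
  · simp [seg_length]; omega
  · intro i h1 h2
    simp [seg, List.getElem_take]

lemma meetInf_eq_seg (ν : List Bool) (η : ℕ → Bool) :
    meetInf ν η = seg η (meetLen ν (seg η ν.length)) := by
  rw [meetInf, meet_eq_take_right, seg_take]
  simpa [seg_length] using meetLen_le_right ν (seg η ν.length)

/-- If for all `n₁ < n₂ < n₃` in the infinite set `B` we have
`lg(ν_{n₂} ∩ ν_{n₃}) > lg(ν_{n₁})`, and the lengths are strictly increasing on `B`,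
then there is a branch `η₂ ∈ 2^ω` such that `(ν_n ∩ η₂ : n ∈ B)` is strictly
increasing under end-extension and `η₂ = ⋃_{n ∈ B} (ν_n ∩ η₂)`. -/
theorem branch_from_triples (B : Set ℕ) (hB : B.Infinite) (ν : ℕ → List Bool)
    (hlen : ∀ n ∈ B, ∀ k ∈ B, n < k → (ν n).length < (ν k).length)
    (htri : ∀ n₁ ∈ B, ∀ n₂ ∈ B, ∀ n₃ ∈ B, n₁ < n₂ → n₂ < n₃ →
      (ν n₁).length < (meet (ν n₂) (ν n₃)).length) :
    ∃ η₂ : ℕ → Bool,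
      (∀ n ∈ B, ∀ k ∈ B, n < k →
        meetInf (ν n) η₂ <+: meetInf (ν k) η₂ ∧ meetInf (ν n) η₂ ≠ meetInf (ν k) η₂) ∧
      (∀ i : ℕ, ∃ n ∈ B, i < (meetInf (ν n) η₂).length) := by
  classical
  set e : ℕ → ℕ := Nat.nth (· ∈ B) with he
  have heB : ∀ j, e j ∈ B := fun j => Nat.nth_mem_of_infinite hB j
  have hemono : StrictMono e := Nat.nth_strictMono hB
  have hlenmono : StrictMono (fun j => (ν (e j)).length) := fun a b hab =>
    hlen _ (heB a) _ (heB b) (hemono hab)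
  have hlenge : ∀ j, j ≤ (ν (e j)).length := fun j => hlenmono.le_apply
  set η₂ : ℕ → Bool := fun i => (ν (e (i + 2))).getD i false with hη
  have htri' : ∀ n₁ ∈ B, ∀ n₂ ∈ B, ∀ n₃ ∈ B, n₁ < n₂ → n₂ < n₃ →
      (ν n₁).length < meetLen (ν n₂) (ν n₃) := by
    intro n₁ h1 n₂ h2 n₃ h3 h12 h23
    have := htri n₁ h1 n₂ h2 n₃ h3 h12 h23
    rwa [meet_length] at this
  have hagree : ∀ i, ∀ m ∈ B, e (i + 2) ≤ m → (ν m).getD i false = η₂ i := by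
    intro i m hm hle
    rcases eq_or_lt_of_le hle with heq | hlt
    · rw [hη]; simp only; rw [heq]
    · have h2 := htri' (e (i + 1)) (heB _) (e (i + 2)) (heB _) m hm
        (hemono (by omega)) hlt
      have hi : i < meetLen (ν (e (i + 2))) (ν m) := by
        have := hlenge (i + 1); omega
      rw [hη]; simp only
      exact (meetLen_agree _ _ i hi).symm
  have hkey : ∀ n ∈ B, ∀ k ∈ B, n < k →
      (ν n).length < meetLen (ν k) (seg η₂ (ν k).length) := by
    intro n hn k hk hnk
    have hlk := hlen n hn k hk hnk
    have := le_meetLen (ν k) (seg η₂ (ν k).length) ((ν n).length + 1) (by omega)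
      (by rw [seg_length]; omega) ?_
    · omega
    intro i hi
    have hjk : k < e (max (k + 1) (i + 2)) :=
      lt_of_lt_of_le (by omega : k < max (k + 1) (i + 2)) hemono.le_apply
    have h1 : (ν (e (max (k + 1) (i + 2)))).getD i false = η₂ i :=
      hagree i _ (heB _) (hemono.monotone (le_max_right _ _))
    have h2 := htri' n hn k hk (e (max (k + 1) (i + 2))) (heB _) hnk hjk
    have h3 : (ν k).getD i false = (ν (e (max (k + 1) (i + 2)))).getD i false :=
      meetLen_agree _ _ i (by omega)
    rw [h3, h1, seg_getD _ _ _ (by omega)]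
  refine ⟨η₂, ?_, ?_⟩
  · intro n hn k hk hnk
    have h1 : meetLen (ν n) (seg η₂ (ν n).length) ≤ (ν n).length := meetLen_le_left _ _
    have h2 := hkey n hn k hk hnk
    rw [meetInf_eq_seg, meetInf_eq_seg]
    constructor
    · rw [← seg_take η₂ _ _ (by omega : meetLen (ν n) (seg η₂ (ν n).length)
        ≤ meetLen (ν k) (seg η₂ (ν k).length))]
      exact List.take_prefix _ _
    · intro h
      have := congrArg List.length h
      simp only [seg_length] at this
      omega
  · intro i
    refine ⟨e (i + 1), heB _, ?_⟩
    rw [meetInf_eq_seg, seg_length]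
    have h1 := hkey (e i) (heB i) (e (i + 1)) (heB _) (hemono (by omega))
    have h2 := hlenge i
    omega
end
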